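/- Let q > 0 and let g be an entire function such that sup_{w∈ℂ} ∫_{D(w,δ)} |g(z)|^q dA(z) < ∞ for some δ > 0. Then g is constant. -/

import Mathlib

open MeasureTheory

open Metric Real

lemma circle_submean (f : ℂ → ℂ) (hf : Differentiable ℂ f) (c : ℂ) {ρ : ℝ} (hρ : 0 < ρ) :
    2 * π * ‖f c‖ ≤ ∫ θ in Set.Ioo (-π) π, ‖f (circleMap c ρ θ)‖ := by
  have key : (∮ z in C(c, ρ), (z - c)⁻¹ • f z) = (2 * ↑π * Complex.I) • f c :=
    (hf.diffContOnCl).circleIntegral_sub_inv_smul (mem_ball_self hρ)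
  have h1 : ‖(2 * ↑π * Complex.I) • f c‖ = 2 * π * ‖f c‖ := by
    simp [norm_smul, Complex.norm_of_nonneg, abs_of_nonneg Real.pi_nonneg]
  have h2 : ‖∮ z in C(c, ρ), (z - c)⁻¹ • f z‖
      ≤ ∫ θ in (0:ℝ)..2 * π, ‖f (circleMap c ρ θ)‖ := by
    rw [circleIntegral]
    refine le_trans (intervalIntegral.norm_integral_le_integral_norm (by positivity))
      (le_of_eq ?_)
    refine intervalIntegral.integral_congr fun θ _ => ?_
    rw [deriv_circleMap, circleMap_sub_center, norm_smul, norm_smul, norm_inv]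
    simp only [norm_mul, norm_circleMap_zero, Complex.norm_I, mul_one,
      abs_of_pos hρ]
    field_simp
  have hper : Function.Periodic (fun θ => ‖f (circleMap c ρ θ)‖) (2 * π) :=
    fun θ => by simp [periodic_circleMap c ρ θ]
  have h3 : (∫ θ in (0:ℝ)..2 * π, ‖f (circleMap c ρ θ)‖)
      = ∫ θ in Set.Ioo (-π) π, ‖f (circleMap c ρ θ)‖ := by
    have := hper.intervalIntegral_add_eq 0 (-π)
    rw [zero_add] at this
    rw [this]
    have hππ : -π + 2 * π = π := by ring
    rw [hππ, intervalIntegral.integral_of_le (by linarith [pi_pos]),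
      MeasureTheory.integral_Ioc_eq_integral_Ioo]
  calc 2 * π * ‖f c‖ = ‖(2 * ↑π * Complex.I) • f c‖ := h1.symm
    _ = ‖∮ z in C(c, ρ), (z - c)⁻¹ • f z‖ := by rw [key]
    _ ≤ _ := h3 ▸ h2

lemma area_submean (f : ℂ → ℂ) (hf : Differentiable ℂ f) (c : ℂ) {r : ℝ} (hr : 0 < r) :
    π * r ^ 2 * ‖f c‖ ≤ ∫ z in ball c r, ‖f z‖ := by
  set G : ℝ × ℝ → ℝ := fun p => p.1 * ‖f (c + p.1 * (Real.cos p.2 + Real.sin p.2 * Complex.I))‖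
    with hGdef
  have hGc : Continuous G := by
    apply Continuous.mul continuous_fst
    apply Continuous.norm
    apply hf.continuous.comp
    fun_prop
  -- step 1: translate
  have step1 : (∫ z in ball c r, ‖f z‖)
      = ∫ z, (ball (0:ℂ) r).indicator (fun z => ‖f (c + z)‖) z := by
    rw [← integral_indicator measurableSet_ball,
      ← integral_add_left_eq_self (fun z => (ball c r).indicator (fun z => ‖f z‖) z) c]
    congr 1
    ext z
    by_cases h : z ∈ ball (0:ℂ) r
    · have h' : c + z ∈ ball c r := by
        simpa [mem_ball, dist_eq_norm] using h
      rw [Set.indicator_of_mem h' , Set.indicator_of_mem h]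
    · have h' : c + z ∉ ball c r := by
        simpa [mem_ball, dist_eq_norm] using h
      rw [Set.indicator_of_notMem h', Set.indicator_of_notMem h]
  -- step 2: polar coordinates
  have step2 : (∫ z, (ball (0:ℂ) r).indicator (fun z => ‖f (c + z)‖) z)
      = ∫ p in Set.Ioo (0:ℝ) r ×ˢ Set.Ioo (-π) π, G p := by
    rw [← Complex.integral_comp_polarCoord_symm]
    rw [show polarCoord.target = Set.Ioi (0:ℝ) ×ˢ Set.Ioo (-π) π from rfl]
    have hmeas : MeasurableSet {p : ℝ × ℝ | p.1 < r} :=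
      (isOpen_lt continuous_fst continuous_const).measurableSet
    have heq : ∀ p ∈ Set.Ioi (0:ℝ) ×ˢ Set.Ioo (-π) π,
        p.1 • (ball (0:ℂ) r).indicator (fun z => ‖f (c + z)‖) (Complex.polarCoord.symm p)
        = {p : ℝ × ℝ | p.1 < r}.indicator G p := by
      rintro ⟨ρ, θ⟩ ⟨hρ, hθ⟩
      simp only [Set.mem_Ioi] at hρ
      have habs : ‖Complex.polarCoord.symm (ρ, θ)‖ = ρ := by
        rw [Complex.norm_polarCoord_symm, abs_of_pos hρ]
      by_cases h : ρ < r
      · rw [Set.indicator_of_mem (by simpa [mem_ball, Complex.dist_eq, habs, abs_of_pos hρ] using h :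
            Complex.polarCoord.symm (ρ, θ) ∈ ball (0:ℂ) r),
          Set.indicator_of_mem (by exact h)]
        simp [hGdef, Complex.polarCoord_symm_apply, smul_eq_mul]
      · rw [Set.indicator_of_notMem (by simpa [mem_ball, Complex.dist_eq, habs, abs_of_pos hρ] using h :
            Complex.polarCoord.symm (ρ, θ) ∉ ball (0:ℂ) r),
          Set.indicator_of_notMem (by exact h)]
        simp
    have hsets : Set.Ioi (0:ℝ) ×ˢ Set.Ioo (-π) π ∩ {p : ℝ × ℝ | p.1 < r}
        = Set.Ioo (0:ℝ) r ×ˢ Set.Ioo (-π) π := by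
      ext p
      simp only [Set.mem_inter_iff, Set.mem_prod, Set.mem_Ioi, Set.mem_Ioo, Set.mem_setOf_eq]
      tauto
    rw [setIntegral_congr_fun (measurableSet_Ioi.prod measurableSet_Ioo) heq,
      setIntegral_indicator hmeas, hsets]
  -- integrability
  have hGi : IntegrableOn G (Set.Ioo (0:ℝ) r ×ˢ Set.Ioo (-π) π) := by
    apply (hGc.continuousOn.integrableOn_compact (isCompact_Icc.prod isCompact_Icc)).mono_set
    exact Set.prod_mono Set.Ioo_subset_Icc_self Set.Ioo_subset_Icc_self
  -- step 3: Fubini + bound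
  rw [step1, step2]
  rw [Measure.volume_eq_prod] at hGi ⊢
  rw [setIntegral_prod _ hGi]
  have hmarg : IntegrableOn (fun ρ => ∫ θ in Set.Ioo (-π) π, G (ρ, θ)) (Set.Ioo (0:ℝ) r) := by
    rw [IntegrableOn, ← Measure.prod_restrict] at hGi
    exact hGi.integral_prod_left
  have key : ∀ ρ ∈ Set.Ioo (0:ℝ) r,
      2 * π * ‖f c‖ * ρ ≤ ∫ θ in Set.Ioo (-π) π, G (ρ, θ) := by
    intro ρ hρ
    have hρ0 : 0 < ρ := hρ.1
    have hcm : ∀ θ : ℝ, G (ρ, θ) = ρ * ‖f (circleMap c ρ θ)‖ := by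
      intro θ
      simp [hGdef, circleMap, Complex.exp_mul_I]
    simp only [hcm]
    rw [integral_const_mul]
    rw [mul_comm (2 * π * ‖f c‖) ρ]
    exact mul_le_mul_of_nonneg_left (circle_submean f hf c hρ0) hρ0.le
  calc π * r ^ 2 * ‖f c‖ = ∫ ρ in Set.Ioo (0:ℝ) r, 2 * π * ‖f c‖ * ρ := by
        rw [integral_const_mul, ← integral_Ioc_eq_integral_Ioo,
          ← intervalIntegral.integral_of_le hr.le]
        simp [integral_id]
        ring
    _ ≤ ∫ ρ in Set.Ioo (0:ℝ) r, ∫ θ in Set.Ioo (-π) π, G (ρ, θ) := by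
        refine setIntegral_mono_on ?_ hmarg measurableSet_Ioo key
        exact ((continuous_const.mul continuous_id).continuousOn.integrableOn_compact
          isCompact_Icc).mono_set Set.Ioo_subset_Icc_self

lemma norm_rpow_integrableOn (f : ℂ → ℂ) (hf : Differentiable ℂ f) {q : ℝ} (hq : 0 < q)
    (w : ℂ) (δ : ℝ) : IntegrableOn (fun z => ‖f z‖ ^ q) (ball w δ) := by
  have hcont : Continuous fun z => ‖f z‖ ^ q :=
    (hf.continuous.norm).rpow_const (fun z => Or.inr hq.le)
  exact (hcont.continuousOn.integrableOn_compact (isCompact_closedBall w δ)).mono_set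
    ball_subset_closedBall

lemma weighted_bound (f : ℂ → ℂ) (hf : Differentiable ℂ f) {q δ K : ℝ} (hq : 0 < q)
    (hq1 : q ≤ 1) (hδ : 0 < δ) (w : ℂ) (hK : (∫ z in ball w δ, ‖f z‖ ^ q) ≤ K) :
    ‖f w‖ ^ q * δ ^ 2 ≤ 2 ^ (2 / q) * K / π := by
  have hqne : q ≠ 0 := hq.ne'
  have h2q : (0:ℝ) < 2 / q := by positivity
  have hK0 : 0 ≤ K := le_trans (setIntegral_nonneg measurableSet_ball
    (fun z _ => Real.rpow_nonneg (norm_nonneg _) q)) hK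
  set u : ℂ → ℝ := fun z => (δ - dist z w) ^ (2 / q) * ‖f z‖ with hu
  have hucont : Continuous u :=
    ((continuous_const.sub (continuous_id.dist continuous_const)).rpow_const
      (fun z => Or.inr h2q.le)).mul hf.continuous.norm
  obtain ⟨z₀, hz₀mem, hmax⟩ := (isCompact_closedBall w δ).exists_isMaxOn
    (nonempty_closedBall.2 hδ.le) hucont.continuousOn
  set m := u z₀ with hm
  have hδ2q : ((δ:ℝ) ^ (2 / q)) ^ q = δ ^ 2 := by
    rw [← Real.rpow_mul hδ.le, div_mul_cancel₀ _ hqne,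
      show (2:ℝ) = ((2:ℕ):ℝ) by norm_num, Real.rpow_natCast]
  have huw : δ ^ (2 / q) * ‖f w‖ ≤ m := by
    have := hmax (mem_closedBall_self hδ.le)
    simpa [hu, dist_self] using this
  have hm0 : 0 ≤ m := le_trans (by positivity) huw
  rcases eq_or_lt_of_le hm0 with hmz | hmpos
  · -- m = 0 case: f w = 0
    have hfw : ‖f w‖ = 0 := by
      have h1 : δ ^ (2 / q) * ‖f w‖ ≤ 0 := hmz ▸ huw
      have h2 : (0:ℝ) < δ ^ (2 / q) := Real.rpow_pos_of_pos hδ _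
      nlinarith [norm_nonneg (f w)]
    rw [hfw, Real.zero_rpow hqne, zero_mul]
    positivity
  · -- main case
    have hfz₀ : 0 < ‖f z₀‖ := by
      rcases (mul_pos_iff.1 hmpos) with ⟨_, h⟩ | ⟨h, _⟩
      · exact h
      · exact absurd h (not_lt.2 (Real.rpow_nonneg
          (sub_nonneg.2 (mem_closedBall.1 hz₀mem)) _))
    have hd : 0 < δ - dist z₀ w := by
      by_contra hcon
      push_neg at hcon
      have h0 : δ - dist z₀ w = 0 :=
        le_antisymm hcon (sub_nonneg.2 (mem_closedBall.1 hz₀mem))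
      have hmeq : m = (δ - dist z₀ w) ^ (2 / q) * ‖f z₀‖ := rfl
      rw [h0, Real.zero_rpow h2q.ne', zero_mul] at hmeq
      exact absurd (hmeq ▸ hmpos) (lt_irrefl 0)
    set d := δ - dist z₀ w with hdd
    set r := d / 2 with hr
    have hrpos : 0 < r := by positivity
    set A := r ^ (2 / q) with hA
    have hApos : 0 < A := Real.rpow_pos_of_pos hrpos _
    set S := m / A with hS
    have hSpos : 0 < S := div_pos hmpos hApos
    have hsub : ball z₀ r ⊆ ball w δ := by
      intro ζ hζ
      rw [mem_ball] at hζ ⊢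
      have := dist_triangle ζ z₀ w
      have hdw : dist z₀ w = δ - d := by rw [hdd]; ring
      nlinarith
    have hSbound : ∀ ζ ∈ ball z₀ r, ‖f ζ‖ ≤ S := by
      intro ζ hζ
      have hum : u ζ ≤ m := hmax (ball_subset_closedBall (hsub hζ))
      have hdist : r ≤ δ - dist ζ w := by
        rw [mem_ball] at hζ
        have := dist_triangle ζ z₀ w
        have hdw : dist z₀ w = δ - d := by rw [hdd]; ring
        nlinarith
      have hAle : A ≤ (δ - dist ζ w) ^ (2 / q) :=
        Real.rpow_le_rpow hrpos.le hdist h2q.le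
      have hle : A * ‖f ζ‖ ≤ m := le_trans
        (mul_le_mul_of_nonneg_right hAle (norm_nonneg _)) hum
      rw [hS, le_div_iff₀ hApos, mul_comm]
      exact hle
    have hptwise : ∀ ζ ∈ ball z₀ r, ‖f ζ‖ ≤ S ^ (1 - q) * ‖f ζ‖ ^ q := by
      intro ζ hζ
      have h1 : ‖f ζ‖ = ‖f ζ‖ ^ (1 - q) * ‖f ζ‖ ^ q := by
        rw [← Real.rpow_add' (norm_nonneg _) (by norm_num : 1 - q + q ≠ 0),
          show (1:ℝ) - q + q = 1 by ring, Real.rpow_one]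
      refine h1.trans_le ?_
      exact mul_le_mul_of_nonneg_right
        (Real.rpow_le_rpow (norm_nonneg (f ζ)) (hSbound ζ hζ)
          (by linarith : (0:ℝ) ≤ 1 - q))
        (Real.rpow_nonneg (norm_nonneg (f ζ)) q)
    have hint1 : IntegrableOn (fun z => ‖f z‖) (ball z₀ r) :=
      ((hf.continuous.norm).continuousOn.integrableOn_compact
        (isCompact_closedBall z₀ r)).mono_set ball_subset_closedBall
    have hintq : IntegrableOn (fun z => ‖f z‖ ^ q) (ball z₀ r) :=
      norm_rpow_integrableOn f hf hq z₀ r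
    have hchain : π * r ^ 2 * ‖f z₀‖ ≤ S ^ (1 - q) * K := by
      calc π * r ^ 2 * ‖f z₀‖ ≤ ∫ z in ball z₀ r, ‖f z‖ := area_submean f hf z₀ hrpos
        _ ≤ ∫ z in ball z₀ r, S ^ (1 - q) * ‖f z‖ ^ q :=
            setIntegral_mono_on hint1 (hintq.const_mul _) measurableSet_ball hptwise
        _ = S ^ (1 - q) * ∫ z in ball z₀ r, ‖f z‖ ^ q := integral_const_mul _ _
        _ ≤ S ^ (1 - q) * ∫ z in ball w δ, ‖f z‖ ^ q := by
            refine mul_le_mul_of_nonneg_left ?_ (Real.rpow_nonneg hSpos.le _)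
            refine setIntegral_mono_set (norm_rpow_integrableOn f hf hq w δ)
              (Filter.Eventually.of_forall fun z => Real.rpow_nonneg (norm_nonneg _) q)
              (HasSubset.Subset.eventuallyLE hsub)
        _ ≤ S ^ (1 - q) * K := mul_le_mul_of_nonneg_left hK (Real.rpow_nonneg hSpos.le _)
    -- algebra
    have hAq : A ^ q = r ^ 2 := by
      rw [hA, ← Real.rpow_mul hrpos.le, div_mul_cancel₀ _ hqne,
        show (2:ℝ) = ((2:ℕ):ℝ) by norm_num, Real.rpow_natCast]
    obtain ⟨a, ha⟩ : ∃ a, a = m ^ (1 - q) := ⟨_, rfl⟩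
    obtain ⟨b, hb⟩ : ∃ b, b = A ^ (1 - q) := ⟨_, rfl⟩
    obtain ⟨c₂, hc₂⟩ : ∃ c, c = (2:ℝ) ^ (2 / q) := ⟨_, rfl⟩
    have hapos : 0 < a := ha ▸ Real.rpow_pos_of_pos hmpos _
    have hbpos : 0 < b := hb ▸ Real.rpow_pos_of_pos hApos _
    have hc₂pos : 0 < c₂ := hc₂ ▸ Real.rpow_pos_of_pos (by norm_num) _
    have hArel : A = r ^ 2 * b := by
      have h' : A ^ (q + (1 - q)) = A ^ q * A ^ (1 - q) := Real.rpow_add hApos q (1 - q)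
      rw [show q + (1 - q) = 1 by ring, Real.rpow_one, hAq, ← hb] at h'
      exact h'
    have hdeq : d ^ (2 / q) = c₂ * A := by
      rw [hc₂, hA, ← Real.mul_rpow (by norm_num) hrpos.le]
      congr 1
      rw [hr]; ring
    have hSeq : S ^ (1 - q) = a / b := by
      rw [hS, Real.div_rpow hm0 hApos.le, ← ha, ← hb]
    have hfb : ‖f z₀‖ ≤ a / b * K / (π * r ^ 2) := by
      rw [le_div_iff₀ (by positivity)]
      rw [hSeq] at hchain
      linarith
    have hmle : m ≤ c₂ * a * K / π := by
      have hmeq : m = c₂ * (r ^ 2 * b) * ‖f z₀‖ := by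
        have : m = d ^ (2 / q) * ‖f z₀‖ := rfl
        rw [this, hdeq, hArel]
      have h2 : m ≤ c₂ * (r ^ 2 * b) * (a / b * K / (π * r ^ 2)) := by
        rw [hmeq]
        exact mul_le_mul_of_nonneg_left hfb
          (mul_nonneg hc₂pos.le (mul_nonneg (sq_nonneg r) hbpos.le))
      have h3 : c₂ * (r ^ 2 * b) * (a / b * K / (π * r ^ 2)) = c₂ * a * K / π := by
        field_simp
      linarith
    have hmsplit : m ^ q * a = m := by
      rw [ha, ← Real.rpow_add hmpos, show q + (1 - q) = 1 by ring, Real.rpow_one]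
    have hmq : m ^ q ≤ c₂ * K / π := by
      refine le_of_mul_le_mul_right ?_ hapos
      rw [hmsplit]
      calc m ≤ c₂ * a * K / π := hmle
        _ = c₂ * K / π * a := by ring
    have hfinal : ‖f w‖ ^ q * δ ^ 2 ≤ m ^ q := by
      have h1 : (δ ^ (2 / q) * ‖f w‖) ^ q ≤ m ^ q :=
        Real.rpow_le_rpow (by positivity) huw hq.le
      rw [Real.mul_rpow (by positivity) (norm_nonneg _), hδ2q] at h1
      linarith [h1]
    rw [hc₂] at hmq
    linarith

/-- If g is entire and sup_{w∈ℂ} ∫_{D(w,δ)} |g(z)|^q dA(z) < ∞ for some δ > 0,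
then g is constant. -/
theorem stmt13 (q δ : ℝ) (hq : 0 < q) (hδ : 0 < δ) (g : ℂ → ℂ) (hg : Differentiable ℂ g)
    (hbound : ∃ C : ℝ, ∀ w : ℂ,
      (∫ z in Metric.ball w δ, ‖g z‖ ^ q) ≤ C) :
    ∃ c : ℂ, ∀ z : ℂ, g z = c := by
  obtain ⟨C, hC⟩ := hbound
  have hC' : ∀ w : ℂ, (∫ z in ball w δ, ‖g z‖ ^ q) ≤ C := by
    intro w
    exact hC w
  set t := min q 1 with ht
  have htpos : 0 < t := lt_min hq one_pos
  have ht1 : t ≤ 1 := min_le_right _ _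
  have htq : t ≤ q := min_le_left _ _
  set K := π * δ ^ 2 + C with hKdef
  -- pointwise : x^t ≤ 1 + x^q for x ≥ 0
  have hpt : ∀ x : ℝ, 0 ≤ x → x ^ t ≤ 1 + x ^ q := by
    intro x hx
    rcases le_or_gt x 1 with hx1 | hx1
    · have : x ^ t ≤ 1 := Real.rpow_le_one hx hx1 htpos.le
      have : (0:ℝ) ≤ x ^ q := Real.rpow_nonneg hx q
      linarith [Real.rpow_le_one hx hx1 htpos.le]
    · have h1 : x ^ t ≤ x ^ q := Real.rpow_le_rpow_of_exponent_le hx1.le htq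
      have h2 : (0:ℝ) ≤ x ^ q := Real.rpow_nonneg hx q
      linarith
  have hball : ∀ w : ℂ, (volume (ball w δ)).toReal = δ ^ 2 * π := by
    intro w
    rw [Complex.volume_ball, ENNReal.toReal_mul, ENNReal.toReal_pow,
      ENNReal.toReal_ofReal hδ.le]
    simp [NNReal.coe_real_pi]
  have hKb : ∀ w : ℂ, (∫ z in ball w δ, ‖g z‖ ^ t) ≤ K := by
    intro w
    have hint_t : IntegrableOn (fun z => ‖g z‖ ^ t) (ball w δ) :=
      norm_rpow_integrableOn g hg htpos w δ
    have hint_q : IntegrableOn (fun z => ‖g z‖ ^ q) (ball w δ) :=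
      norm_rpow_integrableOn g hg hq w δ
    have hint_c : IntegrableOn (fun _ : ℂ => (1:ℝ)) (ball w δ) :=
      integrableOn_const measure_ball_lt_top.ne
    calc (∫ z in ball w δ, ‖g z‖ ^ t)
        ≤ ∫ z in ball w δ, (1 + ‖g z‖ ^ q) :=
          setIntegral_mono_on hint_t (hint_c.add hint_q) measurableSet_ball
            (fun z _ => hpt ‖g z‖ (norm_nonneg _))
      _ = (∫ _ in ball w δ, (1:ℝ)) + ∫ z in ball w δ, ‖g z‖ ^ q :=
          integral_add hint_c hint_q
      _ ≤ π * δ ^ 2 + C := by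
          have h1 : (∫ _ in ball w δ, (1:ℝ)) = δ ^ 2 * π := by
            rw [setIntegral_const, smul_eq_mul, mul_one, measureReal_def, hball w]
          rw [h1]
          linarith [hC' w]
  -- boundedness of g
  set B := ((2 ^ (2 / t) * K / π / δ ^ 2) ⊔ 0) ^ (1 / t) with hB
  have hgb : ∀ w : ℂ, ‖g w‖ ≤ B := by
    intro w
    have h1 : ‖g w‖ ^ t * δ ^ 2 ≤ 2 ^ (2 / t) * K / π :=
      weighted_bound g hg htpos ht1 hδ w (hKb w)
    have h2 : ‖g w‖ ^ t ≤ (2 ^ (2 / t) * K / π / δ ^ 2) ⊔ 0 := by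
      rw [le_sup_iff]
      left
      rw [le_div_iff₀ (by positivity)]
      exact h1
    have h3 : (‖g w‖ ^ t) ^ (1 / t) ≤ B :=
      Real.rpow_le_rpow (Real.rpow_nonneg (norm_nonneg _) t) h2 (by positivity)
    have h4 : (‖g w‖ ^ t) ^ (1 / t) = ‖g w‖ := by
      rw [← Real.rpow_mul (norm_nonneg _), mul_one_div, div_self htpos.ne',
        Real.rpow_one]
    rwa [h4] at h3
  have hbd : Bornology.IsBounded (Set.range g) := by
    rw [isBounded_iff_forall_norm_le]
    exact ⟨B, by rintro x ⟨w, rfl⟩; exact hgb w⟩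
  exact hg.exists_const_forall_eq_of_bounded hbd
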